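/- Assume the setting and hypothesis (A). Then: (1) l₀ := inf_{x ∈ M} m(B(x,ξ₀)) > 0; (2) every open set 𝒰_i of every s-invariant domain contains an open ball of radius ξ₀, hence m(𝒰_i) ≥ l₀; (3) the period of every s-invariant domain is at most 1/l₀; (4) there are only finitely many minimal domains up to cyclic shift, indeed at most 1/l₀ of them. -/

import Mathlib

open MeasureTheory Metric Set Filter Topology

noncomputable section

/-- The parameter space `T`: the closed `ε`-ball around `a` in `ℝⁿ`. -/
abbrev PSpace (n : ℕ) (a : EuclideanSpace ℝ (Fin n)) (ε : ℝ) : Type _ :=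
  ↥(Metric.closedBall a ε)

/-- Perturbed iterates: `pIter f k z t = f_{t_k} ∘ ⋯ ∘ f_{t_1} (z)`
(the sequence `t` is indexed from `0` here). -/
def pIter {M T : Type*} (f : M → T → M) : ℕ → M → (ℕ → T) → M
  | 0, z, _ => z
  | k + 1, z, t => f (pIter f k z t) (t k)

/-- An s-invariant domain for the randomly perturbed system: a finite tuple of
nonempty open sets with pairwise disjoint closures, permuted cyclically by all
perturbed iterates. -/
structure SInvDomain {M T : Type*} [TopologicalSpace M] (f : M → T → M) where
  r : ℕ
  r_pos : 0 < r
  U : Fin r → Set M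
  isOpen : ∀ i, IsOpen (U i)
  nonempty : ∀ i, (U i).Nonempty
  separated : ∀ i j : Fin r, i ≠ j → closure (U i) ∩ closure (U j) = ∅
  invariant : ∀ k : ℕ, 1 ≤ k → ∀ i : Fin r, ∀ z ∈ U i, ∀ t : ℕ → T,
    pIter f k z t ∈ U ⟨((i : ℕ) + k) % r, Nat.mod_lt _ r_pos⟩

/-- The union `⋃D` of the open sets forming an s-invariant domain. -/
def SInvDomain.carrier {M T : Type*} [TopologicalSpace M] {f : M → T → M}
    (D : SInvDomain f) : Set M := ⋃ i, D.U i

/-- The partial order `D ⪯ D'` on s-invariant domains. -/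
def DomLE {M T : Type*} [TopologicalSpace M] {f : M → T → M}
    (D D' : SInvDomain f) : Prop :=
  ∃ i i' : ℕ, ∀ k : ℕ, 1 ≤ k →
    D.U ⟨(i + k) % D.r, Nat.mod_lt _ D.r_pos⟩ ⊆ D'.U ⟨(i' + k) % D'.r, Nat.mod_lt _ D'.r_pos⟩

/-- Two s-invariant domains coincide up to cyclic shift. -/
def CyclicEq {M T : Type*} [TopologicalSpace M] {f : M → T → M}
    (D D' : SInvDomain f) : Prop :=
  ∃ i i' : ℕ, ∀ k : ℕ, 1 ≤ k →
    D.U ⟨(i + k) % D.r, Nat.mod_lt _ D.r_pos⟩ = D'.U ⟨(i' + k) % D'.r, Nat.mod_lt _ D'.r_pos⟩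

/-- A minimal invariant domain. -/
def MinimalDom {M T : Type*} [TopologicalSpace M] {f : M → T → M}
    (D : SInvDomain f) : Prop :=
  ∀ D' : SInvDomain f, DomLE D' D → CyclicEq D' D

/-- A c-invariant (completely invariant) set. -/
def CInvariant {M T : Type*} (f : M → T → M) (C : Set M) : Prop :=
  ∀ x ∈ C, ∀ t : ℕ → T, ∀ k : ℕ, 1 ≤ k → pIter f k x t ∈ C

/-- The ω-limit of a point under a fixed perturbation vector. -/
def omegaPt {M T : Type*} [TopologicalSpace M] (f : M → T → M) (z : M) (t : ℕ → T) : Set M :=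
  {w | ∃ nseq : ℕ → ℕ, StrictMono nseq ∧
    Tendsto (fun j => pIter f (nseq j) z t) atTop (𝓝 w)}

/-- The ω-limit of a set under a fixed perturbation vector. -/
def omegaSet {M T : Type*} [TopologicalSpace M] (f : M → T → M) (U : Set M) (t : ℕ → T) :
    Set M :=
  {w | ∃ (u : ℕ → M) (nseq : ℕ → ℕ), (∀ j, u j ∈ U) ∧ StrictMono nseq ∧
    Tendsto (fun j => pIter f (nseq j) (u j) t) atTop (𝓝 w)}

/-- The ω-limit of a set under all perturbation vectors. -/
def omegaSetAll {M T : Type*} [TopologicalSpace M] (f : M → T → M) (U : Set M) : Set M :=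
  {w | ∃ (u : ℕ → M) (ts : ℕ → ℕ → T) (nseq : ℕ → ℕ), (∀ j, u j ∈ U) ∧ StrictMono nseq ∧
    Tendsto (fun j => pIter f (nseq j) (u j) (ts j)) atTop (𝓝 w)}

/-- A stationary probability measure for the perturbed system. -/
def Stationary {M T : Type*} [TopologicalSpace M] [MeasurableSpace M] [MeasurableSpace T]
    (f : M → T → M) (ν : Measure T) (μ : Measure M) : Prop :=
  ∀ φ : C(M, ℝ), ∫ z, (∫ t, φ (f z t) ∂ν) ∂μ = ∫ z, φ z ∂μ

/-- The skew product map `S(z,t) = (f_{t₁}(z), σ t)`. -/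
def skewProd {M T : Type*} (f : M → T → M) : M × (ℕ → T) → M × (ℕ → T) :=
  fun p => (f p.1 (p.2 0), fun i => p.2 (i + 1))

/-- The support of a measure: points all of whose open neighbourhoods have
positive measure. -/
def msupport {M : Type*} [TopologicalSpace M] [MeasurableSpace M] (μ : Measure M) : Set M :=
  {x | ∀ O : Set M, IsOpen O → x ∈ O → 0 < μ O}

/-- The ergodic basin `E(μ)` of a stationary measure: points whose time averages along
`ν^∞`-a.e. perturbed orbit converge to the space average of every continuous function. -/
def basin {M T : Type*} [TopologicalSpace M] [MeasurableSpace M] [MeasurableSpace T]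
    (f : M → T → M) (νinf : Measure (ℕ → T)) (μ : Measure M) : Set M :=
  {x | ∀ᵐ t ∂νinf, ∀ φ : C(M, ℝ),
    Tendsto (fun nn : ℕ => (nn : ℝ)⁻¹ * ∑ j ∈ Finset.range nn, φ (pIter f j x t))
      atTop (𝓝 (∫ z, φ z ∂μ))}

/-! Finitely many `ξ₀/2`-balls cover the compact space `M`, and every `ξ₀`-ball contains one
of them, so `l₀ > 0`. Iterating a point of `𝒰ᵢ` for a multiple of the period that is at least
`K` lands in `𝒰ᵢ` again, whatever the perturbations, and by (A) these endpoints fill a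
`ξ₀`-ball. The sets of one domain are disjoint, so `r · l₀ ≤ m(M) = 1`. Two minimal domains
that meet both contain the domain obtained by intersecting their sets along a common orbit
(its period is the lcm of theirs), so by minimality they coincide up to cyclic shift: distinct
minimal domains have disjoint unions, each of measure at least `l₀`. -/

open Function

open scoped ENNReal

theorem iInf_measure_ball_pos {M : Type*} [PseudoMetricSpace M] [CompactSpace M]
    [MeasurableSpace M] (m : Measure M) (hm : ∀ O : Set M, IsOpen O → O.Nonempty → 0 < m O)
    {ξ : ℝ} (hξ : 0 < ξ) : 0 < ⨅ x : M, m (ball x ξ) := by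
  obtain ⟨s, hs⟩ := isCompact_univ.elim_finite_subcover (fun y : M => ball y (ξ / 2))
    (fun _ => isOpen_ball) fun x _ => mem_iUnion.2 ⟨x, mem_ball_self (half_pos hξ)⟩
  have hpos : 0 < s.inf fun y => m (ball y (ξ / 2)) :=
    (Finset.lt_inf_iff ENNReal.zero_lt_top).2 fun y _ =>
      hm _ isOpen_ball ⟨y, mem_ball_self (half_pos hξ)⟩
  refine hpos.trans_le (le_iInf fun x => ?_)
  obtain ⟨y, hy, hxy⟩ := mem_iUnion₂.1 (hs (mem_univ x))
  refine (Finset.inf_le hy).trans (measure_mono (ball_subset_ball' ?_))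
  rw [mem_ball, dist_comm] at hxy
  linarith

theorem card_le_one_div_of_pairwise_disjoint {Ω ι : Type*} [MeasurableSpace Ω] [Fintype ι]
    (μ : Measure Ω) [IsProbabilityMeasure μ] {s : ι → Set Ω} (hs : ∀ i, MeasurableSet (s i))
    (hd : Pairwise (Disjoint on s)) {c : ℝ≥0∞} (hc : c ≠ 0) (hle : ∀ i, c ≤ μ (s i)) :
    (Fintype.card ι : ℝ≥0∞) ≤ 1 / c := by
  rw [ENNReal.le_div_iff_mul_le (.inl hc) (.inr ENNReal.one_ne_top)]
  calc (Fintype.card ι : ℝ≥0∞) * c = ∑ _i : ι, c := by simp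
    _ ≤ ∑ i, μ (s i) := Finset.sum_le_sum fun i _ => hle i
    _ = ∑' i, μ (s i) := (tsum_fintype _).symm
    _ ≤ μ univ := tsum_measure_le_measure_univ (fun i => (hs i).nullMeasurableSet)
      fun _ _ hij => (hd hij).aedisjoint
    _ = 1 := measure_univ

namespace SInvDomain

variable {M T : Type*} [TopologicalSpace M] {f : M → T → M}

/-- `D.piece k` is `𝒰_{k mod r}`; the field `invariant`, `DomLE` and `CyclicEq` are all
phrased through it up to unfolding. -/
def piece (D : SInvDomain f) (k : ℕ) : Set M := D.U ⟨k % D.r, Nat.mod_lt _ D.r_pos⟩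

section

variable (D : SInvDomain f)

theorem piece_val (i : Fin D.r) : D.piece i = D.U i :=
  congrArg D.U (Fin.ext (Nat.mod_eq_of_lt i.isLt))

theorem piece_add_of_dvd {L : ℕ} (h : D.r ∣ L) (j : ℕ) : D.piece (j + L) = D.piece j := by
  obtain ⟨c, rfl⟩ := h
  exact congrArg D.U (Fin.ext (Nat.add_mul_mod_self_left j D.r c))

theorem piece_add_mod_of_dvd {L : ℕ} (h : D.r ∣ L) (j k : ℕ) :
    D.piece (j + k % L) = D.piece (j + k) :=
  congrArg D.U <| Fin.ext <| show (j + k % L) % D.r = (j + k) % D.r by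
    rw [Nat.add_mod, Nat.mod_mod_of_dvd k h, ← Nat.add_mod]

theorem pIter_mem_piece {k : ℕ} (hk : 1 ≤ k) {j : ℕ} {z : M} (hz : z ∈ D.piece j)
    (t : ℕ → T) : pIter f k z t ∈ D.piece (j + k) := by
  have e : D.piece (j % D.r + k) = D.piece (j + k) :=
    congrArg D.U (Fin.ext (Nat.mod_add_mod j D.r k))
  exact e ▸ D.invariant k hk _ z hz t

theorem disjoint_closure_piece {j l : ℕ} (h : j % D.r ≠ l % D.r) :
    Disjoint (closure (D.piece j)) (closure (D.piece l)) :=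
  Set.disjoint_iff_inter_eq_empty.2 (D.separated _ _ fun e => h (congrArg Fin.val e))

theorem pairwise_disjoint_U : Pairwise (Disjoint on D.U) := fun i j hij =>
  (Set.disjoint_iff_inter_eq_empty.2 (D.separated i j hij)).mono subset_closure subset_closure

end

section

variable [Nonempty T] {p q : ℕ}

def meet (D D' : SInvDomain f) (hpq : (D.piece p ∩ D'.piece q).Nonempty) : SInvDomain f where
  r := Nat.lcm D.r D'.r
  r_pos := Nat.lcm_pos D.r_pos D'.r_pos
  U k := D.piece (p + k) ∩ D'.piece (q + k)
  isOpen _ := (D.isOpen _).inter (D'.isOpen _)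
  nonempty k := by
    obtain ⟨x, hx, hx'⟩ := hpq
    have hL : 1 ≤ k + Nat.lcm D.r D'.r := le_add_left (Nat.lcm_pos D.r_pos D'.r_pos)
    let t : ℕ → T := fun _ => Classical.arbitrary T
    refine ⟨pIter f (k + Nat.lcm D.r D'.r) x t, ?_, ?_⟩
    · simpa only [← add_assoc, D.piece_add_of_dvd (Nat.dvd_lcm_left _ _)]
        using D.pIter_mem_piece hL hx t
    · simpa only [← add_assoc, D'.piece_add_of_dvd (Nat.dvd_lcm_right _ _)]
        using D'.pIter_mem_piece hL hx' t
  separated k l hkl := by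
    refine Set.disjoint_iff_inter_eq_empty.1 ?_
    by_cases hD : (p + k) % D.r = (p + l) % D.r
    · have hD' : (q + k) % D'.r ≠ (q + l) % D'.r := fun hD' =>
        hkl <| Fin.ext <| (Nat.mod_lcm (Nat.ModEq.add_left_cancel' _ hD)
          (Nat.ModEq.add_left_cancel' _ hD')).eq_of_lt_of_lt k.isLt l.isLt
      exact (D'.disjoint_closure_piece hD').mono (closure_mono inter_subset_right)
        (closure_mono inter_subset_right)
    · exact (D.disjoint_closure_piece hD).mono (closure_mono inter_subset_left)
        (closure_mono inter_subset_left)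
  invariant j hj k z hz t := by
    refine ⟨?_, ?_⟩
    · simpa only [D.piece_add_mod_of_dvd (Nat.dvd_lcm_left _ _), ← add_assoc]
        using D.pIter_mem_piece hj hz.1 t
    · simpa only [D'.piece_add_mod_of_dvd (Nat.dvd_lcm_right _ _), ← add_assoc]
        using D'.pIter_mem_piece hj hz.2 t

theorem meet_domLE_left {D D' : SInvDomain f} (hpq : (D.piece p ∩ D'.piece q).Nonempty) :
    DomLE (D.meet D' hpq) D :=
  ⟨0, p, fun k _ z hz => by
    have h : z ∈ D.piece (p + (0 + k) % Nat.lcm D.r D'.r) := hz.1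
    rwa [D.piece_add_mod_of_dvd (Nat.dvd_lcm_left _ _), zero_add] at h⟩

theorem meet_domLE_right {D D' : SInvDomain f} (hpq : (D.piece p ∩ D'.piece q).Nonempty) :
    DomLE (D.meet D' hpq) D' :=
  ⟨0, q, fun k _ z hz => by
    have h : z ∈ D'.piece (q + (0 + k) % Nat.lcm D.r D'.r) := hz.2
    rwa [D'.piece_add_mod_of_dvd (Nat.dvd_lcm_right _ _), zero_add] at h⟩

end

end SInvDomain

section

variable {M T : Type*} [TopologicalSpace M] {f : M → T → M}

theorem CyclicEq.symm {D D' : SInvDomain f} (h : CyclicEq D D') : CyclicEq D' D :=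
  let ⟨i, i', h⟩ := h
  ⟨i', i, fun k hk => (h k hk).symm⟩

theorem CyclicEq.trans {D E D' : SInvDomain f} (h₁ : CyclicEq D E) (h₂ : CyclicEq E D') :
    CyclicEq D D' := by
  obtain ⟨p, q, h₁⟩ : ∃ p q : ℕ, ∀ k, 1 ≤ k → D.piece (p + k) = E.piece (q + k) := h₁
  obtain ⟨s, u, h₂⟩ : ∃ s u : ℕ, ∀ k, 1 ≤ k → E.piece (s + k) = D'.piece (u + k) := h₂
  have hs : s ≤ E.r * s := Nat.le_mul_of_pos_left s E.r_pos
  -- shift `E`'s index by a multiple of its period so that the second relation can be applied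
  refine ⟨p, u + (q + E.r * s - s), fun k hk => ?_⟩
  calc D.piece (p + k) = E.piece (q + k) := h₁ k hk
    _ = E.piece (s + (q + k + E.r * s - s)) := by
      rw [← E.piece_add_of_dvd (dvd_mul_right E.r s)]; congr 1; omega
    _ = D'.piece (u + (q + E.r * s - s) + k) := by
      rw [h₂ _ (by omega)]; congr 1; omega

theorem MinimalDom.cyclicEq_of_inter_nonempty [Nonempty T] {D D' : SInvDomain f}
    (hD : MinimalDom D) (hD' : MinimalDom D') (h : (D.carrier ∩ D'.carrier).Nonempty) :
    CyclicEq D D' := by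
  obtain ⟨x, hx, hx'⟩ := h
  obtain ⟨p, hp⟩ := mem_iUnion.1 hx
  obtain ⟨q, hq⟩ := mem_iUnion.1 hx'
  have hpq : (D.piece p ∩ D'.piece q).Nonempty := ⟨x, D.piece_val p ▸ hp, D'.piece_val q ▸ hq⟩
  exact (hD _ (SInvDomain.meet_domLE_left hpq)).symm.trans
    (hD' _ (SInvDomain.meet_domLE_right hpq))

theorem pairwise_disjoint_carrier_of_minimalDom [Nonempty T] {ι : Type*}
    {Ds : ι → SInvDomain f} (hmin : ∀ i, MinimalDom (Ds i))
    (hne : ∀ i j, i ≠ j → ¬ CyclicEq (Ds i) (Ds j)) :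
    Pairwise (Disjoint on fun i => (Ds i).carrier) := fun i j hij =>
  Set.disjoint_iff_inter_eq_empty.2 <| Set.not_nonempty_iff_eq_empty.1 fun h =>
    hne i j hij ((hmin i).cyclicEq_of_inter_nonempty (hmin j) h)

end

namespace SInvDomain

variable {M T : Type*} [PseudoMetricSpace M] {f : M → T → M} {t₀ : T} {K : ℕ} {ξ : ℝ}

theorem exists_ball_subset
    (hA : ∀ k, K ≤ k → ∀ x, ball (pIter f k x fun _ => t₀) ξ ⊆ range (pIter f k x))
    (D : SInvDomain f) (i : Fin D.r) : ∃ x, ball x ξ ⊆ D.U i := by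
  obtain ⟨z, hz⟩ := D.nonempty i
  have hK : K + 1 ≤ D.r * (K + 1) := Nat.le_mul_of_pos_left _ D.r_pos
  refine ⟨pIter f (D.r * (K + 1)) z fun _ => t₀, (hA _ (by omega) z).trans ?_⟩
  rintro _ ⟨t, rfl⟩
  have h := D.pIter_mem_piece (k := D.r * (K + 1)) (by omega) ((D.piece_val i).symm ▸ hz) t
  rwa [D.piece_add_of_dvd (dvd_mul_right _ _), piece_val] at h

theorem iInf_measure_ball_le [MeasurableSpace M] (m : Measure M)
    (hA : ∀ k, K ≤ k → ∀ x, ball (pIter f k x fun _ => t₀) ξ ⊆ range (pIter f k x))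
    (D : SInvDomain f) (i : Fin D.r) : ⨅ x, m (ball x ξ) ≤ m (D.U i) :=
  let ⟨x, hx⟩ := D.exists_ball_subset hA i
  iInf_le_of_le x (measure_mono hx)

end SInvDomain

theorem statement10_general
    (n : ℕ) (a : EuclideanSpace ℝ (Fin n)) (ε : ℝ)
    (a₀ : PSpace n a ε)
    (M : Type*) [MetricSpace M] [CompactSpace M] [MeasurableSpace M] [BorelSpace M]
    (m : Measure M) (hmprob : IsProbabilityMeasure m)
    (hmpos : ∀ O : Set M, IsOpen O → O.Nonempty → 0 < m O)
    (f : M → PSpace n a ε → M)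
    (K : ℕ) (ξ₀ : ℝ) (hξ₀ : 0 < ξ₀)
    (hypA : ∀ k : ℕ, K ≤ k → ∀ x : M,
      Metric.ball (pIter f k x fun _ => a₀) ξ₀ ⊆ Set.range (pIter f k x))
    : 0 < (⨅ x : M, m (Metric.ball x ξ₀)) ∧
      (∀ D : SInvDomain f, ∀ i : Fin D.r,
        (∃ x : M, Metric.ball x ξ₀ ⊆ D.U i) ∧ (⨅ x : M, m (Metric.ball x ξ₀)) ≤ m (D.U i)) ∧
      (∀ D : SInvDomain f, (D.r : ENNReal) ≤ 1 / ⨅ x : M, m (Metric.ball x ξ₀)) ∧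
      ∀ (N : ℕ) (Ds : Fin N → SInvDomain f), (∀ i, MinimalDom (Ds i)) →
        (∀ i j, i ≠ j → ¬ CyclicEq (Ds i) (Ds j)) →
        (N : ENNReal) ≤ 1 / ⨅ x : M, m (Metric.ball x ξ₀) := by
  have hl₀ : 0 < ⨅ x : M, m (ball x ξ₀) := iInf_measure_ball_pos m hmpos hξ₀
  have hU (D : SInvDomain f) := D.iInf_measure_ball_le m hypA
  refine ⟨hl₀, fun D i => ⟨D.exists_ball_subset hypA i, hU D i⟩, fun D => ?_,
    fun N Ds hmin hne => ?_⟩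
  · simpa using card_le_one_div_of_pairwise_disjoint m (fun i => (D.isOpen i).measurableSet)
      D.pairwise_disjoint_U hl₀.ne' (hU D)
  · have : Nonempty (PSpace n a ε) := ⟨a₀⟩
    have hcarrier (i : Fin N) : ⨅ x : M, m (ball x ξ₀) ≤ m (Ds i).carrier :=
      (hU (Ds i) ⟨0, (Ds i).r_pos⟩).trans (measure_mono (subset_iUnion _ _))
    simpa using card_le_one_div_of_pairwise_disjoint m
      (fun i => (isOpen_iUnion (Ds i).isOpen).measurableSet)
      (pairwise_disjoint_carrier_of_minimalDom hmin hne) hl₀.ne' hcarrier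

/-- Under hypothesis (A): (1) `l₀ := inf_x m(B(x,ξ₀)) > 0`; (2) every
open set of every s-invariant domain contains a `ξ₀`-ball, hence has measure `≥ l₀`;
(3) the period of every s-invariant domain is at most `1/l₀`; (4) any family of pairwise
non-cyclically-equal minimal domains has at most `1/l₀` members. -/
theorem statement10
    (n : ℕ) (hn : 1 ≤ n) (a : EuclideanSpace ℝ (Fin n)) (ε : ℝ) (hε : 0 < ε)
    (a₀ : PSpace n a ε) (ha₀ : (a₀ : EuclideanSpace ℝ (Fin n)) = a)
    (ν : Measure (PSpace n a ε))
    (hν : ν = (volume (Metric.closedBall a ε))⁻¹ •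
      ((volume : Measure (EuclideanSpace ℝ (Fin n))).comap Subtype.val))
    (νinf : Measure (ℕ → PSpace n a ε)) (hprobν : IsProbabilityMeasure νinf)
    (hνinf : ∀ k : ℕ, νinf.map (fun t (i : Fin k) => t i) = Measure.pi fun _ => ν)
    (M : Type*) [MetricSpace M] [CompactSpace M] [MeasurableSpace M] [BorelSpace M]
    (m : Measure M) (hmprob : IsProbabilityMeasure m)
    (hmpos : ∀ O : Set M, IsOpen O → O.Nonempty → 0 < m O)
    (f : M → PSpace n a ε → M)
    (hfc : Continuous fun p : M × PSpace n a ε => f p.1 p.2)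
    (hfh : ∀ t : PSpace n a ε, IsHomeomorph fun z : M => f z t)
    (hfnull : ∀ (t : PSpace n a ε) (A : Set M), m A = 0 →
      m ((fun z => f z t) '' A) = 0 ∧ m ((fun z => f z t) ⁻¹' A) = 0)
    (K : ℕ) (ξ₀ : ℝ) (hξ₀ : 0 < ξ₀)
    (hypA : ∀ k : ℕ, K ≤ k → ∀ x : M,
      Metric.ball (pIter f k x fun _ => a₀) ξ₀ ⊆ Set.range (pIter f k x))
    : 0 < (⨅ x : M, m (Metric.ball x ξ₀)) ∧
      (∀ D : SInvDomain f, ∀ i : Fin D.r,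
        (∃ x : M, Metric.ball x ξ₀ ⊆ D.U i) ∧ (⨅ x : M, m (Metric.ball x ξ₀)) ≤ m (D.U i)) ∧
      (∀ D : SInvDomain f, (D.r : ENNReal) ≤ 1 / ⨅ x : M, m (Metric.ball x ξ₀)) ∧
      ∀ (N : ℕ) (Ds : Fin N → SInvDomain f), (∀ i, MinimalDom (Ds i)) →
        (∀ i j, i ≠ j → ¬ CyclicEq (Ds i) (Ds j)) →
        (N : ENNReal) ≤ 1 / ⨅ x : M, m (Metric.ball x ξ₀) :=
  statement10_general n a ε a₀ M m hmprob hmpos f K ξ₀ hξ₀ hypA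

end
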